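/- Let E be a real Banach space, let w : (0,∞) → ℝ be integrable on (0,t) for every t > 0 with ‖w‖_W := sup_{t>0} |Pw(t) − w(t)| < ∞, and let u : (0,∞) → E be strongly measurable with ∫₀^T (1 + |log s|)·‖u(s)‖ ds/s < ∞ for every T > 0. Then for every t > 0 the finite-interval integration-by-parts identity holds: ∫₀ᵗ Pw(s)·u(s) ds/s = Pw(t)·∫₀ᵗ u(s) ds/s − ∫₀ᵗ (w(r) − Pw(r))·(∫₀^r u(s) ds/s) dr/r, all integrals being absolutely convergent Bochner integrals. -/

import Mathlib

open MeasureTheory Set Real Filter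

/-- The averaging operator `Pw(t) = (1/t) ∫₀ᵗ w(s) ds`. -/
noncomputable def Pav (w : ℝ → ℝ) (t : ℝ) : ℝ := (1 / t) * ∫ s in Ioo (0 : ℝ) t, w s

/-!
On every `[s, t] ⊂ (0, ∞)` the average `Pw(x) = x⁻¹ ∫₀ˣ w` is absolutely continuous with
`(Pw)' = (w - Pw) / x` almost everywhere, so `∫ₛᵗ (w - Pw) / r dr = Pw(t) - Pw(s)`; with
`|w - Pw| ≤ C` this gives `|Pw(s)| ≤ |Pw(t)| + C log (t / s)`. The weight `1 + |log s|` on `u` pays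
for exactly this logarithmic growth: it makes the three integrands, and the kernel
`(w(r) - Pw(r)) / (r σ) • u(σ)` on the triangle `σ < r` of `(0, t)²`, integrable. Integrating the
kernel first in `σ` gives the last integral of the identity, first in `r` gives
`∫₀ᵗ (Pw(t) - Pw(σ)) u(σ) dσ / σ`, and Fubini equates the two.
-/

theorem AbsolutelyContinuousOnInterval.congr {X : Type*} [PseudoMetricSpace X] {f g : ℝ → X}
    {a b : ℝ} (hf : AbsolutelyContinuousOnInterval f a b) (hfg : EqOn f g (uIcc a b)) :
    AbsolutelyContinuousOnInterval g a b := by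
  refine Tendsto.congr' ?_ hf
  filter_upwards [mem_inf_of_right (mem_principal_self _)] with E hE
  exact Finset.sum_congr rfl fun i hi => by rw [hfg (hE.1 i hi).1, hfg (hE.1 i hi).2]

theorem sub_le_one_add_abs_mul_one_add_abs (x y : ℝ) : x - y ≤ (1 + |x|) * (1 + |y|) := by
  nlinarith [le_abs_self x, neg_abs_le y, mul_nonneg (abs_nonneg x) (abs_nonneg y)]

theorem Integrable.smul_of_abs_le_mul {α E : Type*} [MeasurableSpace α] {μ : Measure α}
    [NormedAddCommGroup E] [NormedSpace ℝ E] {f φ : α → ℝ} {u : α → E} {M : ℝ}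
    (hφu : Integrable (fun x => φ x * ‖u x‖) μ) (hf : AEStronglyMeasurable f μ)
    (hu : AEStronglyMeasurable u μ) (hfφ : ∀ᵐ x ∂μ, |f x| ≤ M * φ x) :
    Integrable (fun x => f x • u x) μ := by
  refine Integrable.mono' (hφu.const_mul M) (hf.smul hu) ?_
  filter_upwards [hfφ] with x hx
  rw [norm_smul, Real.norm_eq_abs, ← mul_assoc]
  exact mul_le_mul_of_nonneg_right hx (norm_nonneg _)

section Triangle

variable {E : Type*} [NormedAddCommGroup E] [NormedSpace ℝ E] {a b : ℝ} {g : ℝ → ℝ} {v : ℝ → E}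

noncomputable def triangleKernel (g : ℝ → ℝ) (v : ℝ → E) : ℝ × ℝ → E :=
  {p | p.2 < p.1}.indicator fun p => g p.1 • v p.2

theorem triangleKernel_eq_indicator_Iio (r σ : ℝ) :
    triangleKernel g v (r, σ) = (Iio r).indicator (fun σ => g r • v σ) σ := by
  by_cases h : σ < r <;> simp [triangleKernel, indicator, h]

theorem triangleKernel_eq_indicator_Ioi (r σ : ℝ) :
    triangleKernel g v (r, σ) = (Ioi σ).indicator (fun r => g r • v σ) r := by
  by_cases h : σ < r <;> simp [triangleKernel, indicator, h]

theorem setIntegral_Ioo_triangleKernel_fst {r : ℝ} (hr : r ∈ Ioo a b) :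
    ∫ σ in Ioo a b, triangleKernel g v (r, σ) = g r • ∫ σ in Ioo a r, v σ := by
  simp only [triangleKernel_eq_indicator_Iio]
  rw [setIntegral_indicator measurableSet_Iio, integral_smul, Ioo_inter_Iio, min_eq_right hr.2.le]

theorem setIntegral_Ioo_triangleKernel_snd [CompleteSpace E] {σ : ℝ} (hσ : σ ∈ Ioo a b) :
    ∫ r in Ioo a b, triangleKernel g v (r, σ) = (∫ r in Ioo σ b, g r) • v σ := by
  simp only [triangleKernel_eq_indicator_Ioi]
  rw [setIntegral_indicator measurableSet_Ioi, integral_smul_const, Ioo_inter_Ioi,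
    max_eq_right hσ.1.le]

theorem integrable_triangleKernel (hg : AEStronglyMeasurable g (volume.restrict (Ioo a b)))
    (hv : AEStronglyMeasurable v (volume.restrict (Ioo a b)))
    (hg_int : ∀ σ ∈ Ioo a b, IntegrableOn g (Ioo σ b)) {G : ℝ → ℝ}
    (hG : ∀ σ ∈ Ioo a b, ∫ r in Ioo σ b, ‖g r‖ ≤ G σ)
    (hGv : IntegrableOn (fun σ => G σ * ‖v σ‖) (Ioo a b)) :
    Integrable (triangleKernel g v)
      ((volume.restrict (Ioo a b)).prod (volume.restrict (Ioo a b))) := by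
  have hmeas : AEStronglyMeasurable (triangleKernel g v)
      ((volume.restrict (Ioo a b)).prod (volume.restrict (Ioo a b))) :=
    (hg.comp_fst.smul hv.comp_snd).indicator (measurableSet_lt measurable_snd measurable_fst)
  refine (integrable_prod_iff' hmeas).2 ⟨?_, ?_⟩
  · filter_upwards [ae_restrict_mem measurableSet_Ioo] with σ hσ
    simp only [triangleKernel_eq_indicator_Ioi]
    rw [integrable_indicator_iff measurableSet_Ioi, IntegrableOn,
      Measure.restrict_restrict measurableSet_Ioi, Ioi_inter_Ioo, max_eq_left hσ.1.le]
    exact (hg_int σ hσ).smul_const (v σ)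
  · refine Integrable.mono' hGv hmeas.norm.prod_swap.integral_prod_right' ?_
    filter_upwards [ae_restrict_mem measurableSet_Ioo] with σ hσ
    simp only [triangleKernel_eq_indicator_Ioi, norm_indicator_eq_indicator_norm, norm_smul]
    rw [setIntegral_indicator measurableSet_Ioi, integral_mul_const, Ioo_inter_Ioi,
      max_eq_right hσ.1.le, Real.norm_eq_abs,
      abs_of_nonneg (mul_nonneg (integral_nonneg fun _ => norm_nonneg _) (norm_nonneg _))]
    exact mul_le_mul_of_nonneg_right (hG σ hσ) (norm_nonneg _)

theorem integrableOn_smul_setIntegral_Ioo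
    (hgv : Integrable (triangleKernel g v)
      ((volume.restrict (Ioo a b)).prod (volume.restrict (Ioo a b)))) :
    IntegrableOn (fun r => g r • ∫ σ in Ioo a r, v σ) (Ioo a b) := by
  refine hgv.integral_prod_left.congr ?_
  filter_upwards [ae_restrict_mem measurableSet_Ioo] with r hr
  exact setIntegral_Ioo_triangleKernel_fst hr

theorem setIntegral_smul_setIntegral_Ioo_comm [CompleteSpace E]
    (hgv : Integrable (triangleKernel g v)
      ((volume.restrict (Ioo a b)).prod (volume.restrict (Ioo a b)))) :
    ∫ r in Ioo a b, g r • ∫ σ in Ioo a r, v σ = ∫ σ in Ioo a b, (∫ r in Ioo σ b, g r) • v σ :=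
  calc ∫ r in Ioo a b, g r • ∫ σ in Ioo a r, v σ
      = ∫ r in Ioo a b, ∫ σ in Ioo a b, triangleKernel g v (r, σ) :=
        setIntegral_congr_fun measurableSet_Ioo fun _ hr =>
          (setIntegral_Ioo_triangleKernel_fst hr).symm
    _ = ∫ σ in Ioo a b, ∫ r in Ioo a b, triangleKernel g v (r, σ) := integral_integral_swap hgv
    _ = ∫ σ in Ioo a b, (∫ r in Ioo σ b, g r) • v σ :=
        setIntegral_congr_fun measurableSet_Ioo fun _ hσ => setIntegral_Ioo_triangleKernel_snd hσ

end Triangle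

section Averaging

variable {w : ℝ → ℝ} {s t : ℝ}

theorem Pav_eq_inv_mul_intervalIntegral (ht : 0 ≤ t) : Pav w t = t⁻¹ * ∫ x in 0..t, w x := by
  rw [Pav, one_div, intervalIntegral.integral_of_le ht, integral_Ioc_eq_integral_Ioo]

theorem intervalIntegrable_zero_of_integrableOn_Ioo
    (hw : ∀ t > (0 : ℝ), IntegrableOn w (Ioo 0 t)) (ht : 0 < t) : IntervalIntegrable w volume 0 t :=
  (intervalIntegrable_iff_integrableOn_Ioo_of_le ht.le).2 (hw t ht)

theorem absolutelyContinuousOnInterval_Pav (hw : ∀ t > (0 : ℝ), IntegrableOn w (Ioo 0 t))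
    (hs : 0 < s) (hst : s ≤ t) :
    AbsolutelyContinuousOnInterval (Pav w) s t := by
  have ht := hs.trans_le hst
  have hsub : uIcc s t ⊆ Ioi 0 := by
    rw [uIcc_of_le hst]; exact fun x hx => hs.trans_le hx.1
  have hinv : AbsolutelyContinuousOnInterval (fun x : ℝ => x⁻¹) s t :=
    (contDiffOn_inv ℝ |>.mono fun x hx => (hsub hx).ne').absolutelyContinuousOnInterval
  have hprim : AbsolutelyContinuousOnInterval (fun x => ∫ v in 0..x, w v) s t :=
    ((intervalIntegrable_zero_of_integrableOn_Ioo hw ht)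
      |>.absolutelyContinuousOnInterval_intervalIntegral (by simp [ht.le])).mono (by
        rw [uIcc_of_le hst, uIcc_of_le ht.le]; exact Icc_subset_Icc_left hs.le)
  exact (hinv.mul hprim).congr fun x hx =>
    (Pav_eq_inv_mul_intervalIntegral (hsub hx).le).symm

theorem ae_hasDerivAt_Pav (hw : ∀ t > (0 : ℝ), IntegrableOn w (Ioo 0 t)) (t : ℝ) :
    ∀ᵐ r, r ∈ Ioo 0 t → HasDerivAt (Pav w) ((w r - Pav w r) / r) r := by
  rcases le_or_gt t 0 with ht | ht
  · exact ae_of_all _ fun r hr => absurd (hr.1.trans hr.2) ht.not_gt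
  filter_upwards [(intervalIntegrable_zero_of_integrableOn_Ioo hw ht).ae_hasDerivAt_integral]
    with r hprim hr
  have hr0 : 0 < r := hr.1
  have hF := hprim (Ioo_subset_Icc_self.trans Icc_subset_uIcc hr) 0 (by simp [ht.le])
  have hPQ : Pav w =ᶠ[nhds r] fun x => x⁻¹ * ∫ v in 0..x, w v :=
    eventually_of_mem (Ioi_mem_nhds hr0) fun x hx => Pav_eq_inv_mul_intervalIntegral hx.le
  refine (((hasDerivAt_inv hr0.ne').fun_mul hF).congr_of_eventuallyEq hPQ).congr_deriv ?_
  rw [Pav_eq_inv_mul_intervalIntegral hr0.le]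
  field_simp
  ring

theorem deriv_Pav_ae_eq (hw : ∀ t > (0 : ℝ), IntegrableOn w (Ioo 0 t)) (hs : 0 ≤ s) :
    deriv (Pav w) =ᵐ[volume.restrict (Ioo s t)] fun r => (w r - Pav w r) / r := by
  filter_upwards [ae_restrict_mem measurableSet_Ioo, ae_restrict_of_ae (ae_hasDerivAt_Pav hw t)]
    with r hr hderiv
  exact (hderiv ⟨hs.trans_lt hr.1, hr.2⟩).deriv

theorem integrableOn_sub_Pav_div (hw : ∀ t > (0 : ℝ), IntegrableOn w (Ioo 0 t)) (hs : 0 < s)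
    (hst : s ≤ t) : IntegrableOn (fun r => (w r - Pav w r) / r) (Ioo s t) := by
  have h := (absolutelyContinuousOnInterval_Pav hw hs hst).intervalIntegrable_deriv
  rw [intervalIntegrable_iff_integrableOn_Ioo_of_le hst] at h
  exact h.congr (deriv_Pav_ae_eq hw hs.le)

theorem integral_sub_Pav_div (hw : ∀ t > (0 : ℝ), IntegrableOn w (Ioo 0 t)) (hs : 0 < s)
    (hst : s ≤ t) : ∫ r in Ioo s t, (w r - Pav w r) / r = Pav w t - Pav w s := by
  rw [← (absolutelyContinuousOnInterval_Pav hw hs hst).integral_deriv_eq_sub,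
    intervalIntegral.integral_of_le hst, integral_Ioc_eq_integral_Ioo]
  exact integral_congr_ae (deriv_Pav_ae_eq hw hs.le).symm

theorem continuousOn_Pav (hw : ∀ t > (0 : ℝ), IntegrableOn w (Ioo 0 t)) :
    ContinuousOn (Pav w) (Ioi 0) := by
  intro r hr
  have hr0 : (0 : ℝ) < r := hr
  have hcont := (absolutelyContinuousOnInterval_Pav hw (half_pos hr0)
    (by linarith : r / 2 ≤ 2 * r)).continuousOn
  rw [uIcc_of_le (by linarith)] at hcont
  exact (hcont.continuousAt (Icc_mem_nhds (by linarith) (by linarith))).continuousWithinAt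

variable {C : ℝ}

theorem integral_norm_sub_Pav_div_le (hw : ∀ t > (0 : ℝ), IntegrableOn w (Ioo 0 t))
    (hW : ∀ t > (0 : ℝ), |Pav w t - w t| ≤ C) (hs : 0 < s) (hst : s ≤ t) :
    ∫ r in Ioo s t, ‖(w r - Pav w r) / r‖ ≤ C * (log t - log s) := by
  have ht := hs.trans_le hst
  have hinv : IntegrableOn (fun r : ℝ => C * r⁻¹) (Ioo s t) :=
    ((continuousOn_const.mul (continuousOn_inv₀.mono fun x hx => (hs.trans_le hx.1).ne'))
      |>.integrableOn_Icc).mono_set Ioo_subset_Icc_self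
  calc ∫ r in Ioo s t, ‖(w r - Pav w r) / r‖ ≤ ∫ r in Ioo s t, C * r⁻¹ := by
        refine setIntegral_mono_on (integrableOn_sub_Pav_div hw hs hst).norm hinv
          measurableSet_Ioo fun r hr => ?_
        have hr0 := hs.trans hr.1
        rw [norm_div, Real.norm_eq_abs, Real.norm_of_nonneg hr0.le, abs_sub_comm, div_eq_mul_inv]
        exact mul_le_mul_of_nonneg_right (hW r hr0) (inv_nonneg.2 hr0.le)
    _ = C * (log t - log s) := by
        rw [integral_const_mul, ← integral_Ioc_eq_integral_Ioo,
          ← intervalIntegral.integral_of_le hst, integral_inv_of_pos hs ht, log_div ht.ne' hs.ne']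

theorem abs_Pav_le (hw : ∀ t > (0 : ℝ), IntegrableOn w (Ioo 0 t))
    (hW : ∀ t > (0 : ℝ), |Pav w t - w t| ≤ C) (hs : 0 < s) (hst : s ≤ t) :
    |Pav w s| ≤ |Pav w t| + C * (log t - log s) := by
  have h := norm_integral_le_integral_norm (μ := volume.restrict (Ioo s t))
    fun r => (w r - Pav w r) / r
  rw [integral_sub_Pav_div hw hs hst, Real.norm_eq_abs] at h
  linarith [abs_sub_abs_le_abs_sub (Pav w s) (Pav w t), abs_sub_comm (Pav w s) (Pav w t),
    integral_norm_sub_Pav_div_le hw hW hs hst]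

theorem abs_Pav_le_mul_one_add_abs_log (hw : ∀ t > (0 : ℝ), IntegrableOn w (Ioo 0 t))
    (hW : ∀ t > (0 : ℝ), |Pav w t - w t| ≤ C) (hs : 0 < s) (hst : s ≤ t) :
    |Pav w s| ≤ (|Pav w t| + C * (1 + |log t|)) * (1 + |log s|) := by
  have hC : 0 ≤ C := (abs_nonneg _).trans (hW 1 one_pos)
  have hlog := mul_le_mul_of_nonneg_left (sub_le_one_add_abs_mul_one_add_abs (log t) (log s)) hC
  nlinarith [abs_Pav_le hw hW hs hst, abs_nonneg (Pav w t), abs_nonneg (log s)]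

end Averaging

section LogWeighted

variable {E : Type*} [NormedAddCommGroup E] [NormedSpace ℝ E] {u : ℝ → E} {w : ℝ → ℝ} {t C : ℝ}

theorem integrableOn_inv_smul_of_log (hu : AEStronglyMeasurable u (volume.restrict (Ioo 0 t)))
    (hlog : IntegrableOn (fun s => (1 + |log s|) / s * ‖u s‖) (Ioo 0 t)) :
    IntegrableOn (fun s => s⁻¹ • u s) (Ioo 0 t) :=
  Integrable.smul_of_abs_le_mul (M := 1) hlog (by fun_prop) hu <|
    ae_restrict_of_forall_mem measurableSet_Ioo fun s hs => by
      rw [abs_inv, abs_of_pos hs.1, one_mul, div_eq_mul_inv]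
      exact le_mul_of_one_le_left (inv_nonneg.2 hs.1.le) (by simp)

theorem integrableOn_Pav_div_smul_of_log (hw : ∀ t > (0 : ℝ), IntegrableOn w (Ioo 0 t))
    (hW : ∀ t > (0 : ℝ), |Pav w t - w t| ≤ C)
    (hu : AEStronglyMeasurable u (volume.restrict (Ioo 0 t)))
    (hlog : IntegrableOn (fun s => (1 + |log s|) / s * ‖u s‖) (Ioo 0 t)) :
    IntegrableOn (fun s => (Pav w s / s) • u s) (Ioo 0 t) :=
  Integrable.smul_of_abs_le_mul hlog
    ((((continuousOn_Pav hw).mono Ioo_subset_Ioi_self).aestronglyMeasurable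
      measurableSet_Ioo).div₀ aestronglyMeasurable_id) hu <|
    ae_restrict_of_forall_mem measurableSet_Ioo fun s hs => by
      rw [abs_div, abs_of_pos hs.1, mul_div_assoc']
      exact div_le_div_of_nonneg_right (abs_Pav_le_mul_one_add_abs_log hw hW hs.1 hs.2.le) hs.1.le

theorem integrable_triangleKernel_sub_Pav_div_of_log
    (hw : ∀ t > (0 : ℝ), IntegrableOn w (Ioo 0 t)) (hW : ∀ t > (0 : ℝ), |Pav w t - w t| ≤ C)
    (ht : 0 < t) (hu : AEStronglyMeasurable u (volume.restrict (Ioo 0 t)))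
    (hlog : IntegrableOn (fun s => (1 + |log s|) / s * ‖u s‖) (Ioo 0 t)) :
    Integrable (triangleKernel (fun r => (w r - Pav w r) / r) fun s => s⁻¹ • u s)
      ((volume.restrict (Ioo 0 t)).prod (volume.restrict (Ioo 0 t))) := by
  have hC : 0 ≤ C := (abs_nonneg _).trans (hW 1 one_pos)
  have hP : AEStronglyMeasurable (Pav w) (volume.restrict (Ioo 0 t)) :=
    ((continuousOn_Pav hw).mono Ioo_subset_Ioi_self).aestronglyMeasurable measurableSet_Ioo
  refine integrable_triangleKernel (G := fun σ => C * (1 + |log t|) * (1 + |log σ|))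
    (((hw t ht).aestronglyMeasurable.sub hP).div₀ aestronglyMeasurable_id)
    (integrableOn_inv_smul_of_log hu hlog).aestronglyMeasurable
    (fun σ hσ => integrableOn_sub_Pav_div hw hσ.1 hσ.2.le) (fun σ hσ => ?_) ?_
  · refine (integral_norm_sub_Pav_div_le hw hW hσ.1 hσ.2.le).trans ?_
    rw [mul_assoc]
    exact mul_le_mul_of_nonneg_left (sub_le_one_add_abs_mul_one_add_abs _ _) hC
  · refine IntegrableOn.congr_fun (hlog.const_mul (C * (1 + |log t|))) (fun σ hσ => ?_)
      measurableSet_Ioo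
    simp only [norm_smul, norm_inv, Real.norm_of_nonneg hσ.1.le]
    ring

end LogWeighted

/-- Finite-interval integration by parts: for every `t > 0`,
`∫₀ᵗ Pw(s) u(s) ds/s = Pw(t) ∫₀ᵗ u(s) ds/s − ∫₀ᵗ (w(r) − Pw(r)) (∫₀ʳ u(s) ds/s) dr/r`. -/
theorem finite_interval_integration_by_parts {E : Type*} [NormedAddCommGroup E]
    [NormedSpace ℝ E] [CompleteSpace E] (u : ℝ → E) (w : ℝ → ℝ) (C : ℝ)
    (hwInt : ∀ t > (0 : ℝ), IntegrableOn w (Ioo 0 t))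
    (hW : ∀ t > (0 : ℝ), |Pav w t - w t| ≤ C)
    (hu_meas : AEStronglyMeasurable u (volume.restrict (Ioi 0)))
    (hu_int : ∀ T > (0 : ℝ),
      IntegrableOn (fun s => (1 + |Real.log s|) * ‖u s‖ / s) (Ioo 0 T)) :
    ∀ t > (0 : ℝ),
      IntegrableOn (fun s => (Pav w s / s) • u s) (Ioo 0 t) ∧
      IntegrableOn (fun s => s⁻¹ • u s) (Ioo 0 t) ∧
      IntegrableOn
        (fun r => ((w r - Pav w r) / r) • ∫ s in Ioo (0 : ℝ) r, s⁻¹ • u s) (Ioo 0 t) ∧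
      ∫ s in Ioo (0 : ℝ) t, (Pav w s / s) • u s =
        Pav w t • (∫ s in Ioo (0 : ℝ) t, s⁻¹ • u s) -
          ∫ r in Ioo (0 : ℝ) t, ((w r - Pav w r) / r) • ∫ s in Ioo (0 : ℝ) r, s⁻¹ • u s := by
  intro t ht
  have hu : AEStronglyMeasurable u (volume.restrict (Ioo 0 t)) :=
    hu_meas.mono_measure (Measure.restrict_mono Ioo_subset_Ioi_self le_rfl)
  have hlog : IntegrableOn (fun s => (1 + |log s|) / s * ‖u s‖) (Ioo 0 t) := by
    simpa only [div_mul_eq_mul_div] using hu_int t ht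
  have hinv := integrableOn_inv_smul_of_log hu hlog
  have hPu := integrableOn_Pav_div_smul_of_log hwInt hW hu hlog
  have hker := integrable_triangleKernel_sub_Pav_div_of_log hwInt hW ht hu hlog
  refine ⟨hPu, hinv, integrableOn_smul_setIntegral_Ioo hker, ?_⟩
  have hswap : ∫ σ in Ioo 0 t, (∫ r in Ioo σ t, (w r - Pav w r) / r) • σ⁻¹ • u σ =
      ∫ σ in Ioo 0 t, (Pav w t • σ⁻¹ • u σ - (Pav w σ / σ) • u σ) :=
    setIntegral_congr_fun measurableSet_Ioo fun σ hσ => by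
      rw [integral_sub_Pav_div hwInt hσ.1 hσ.2.le, sub_smul, smul_smul (Pav w σ), div_eq_mul_inv]
  rw [setIntegral_smul_setIntegral_Ioo_comm hker, hswap,
    integral_sub (hinv.fun_smul (Pav w t)) hPu, integral_smul, sub_sub_cancel]
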